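/- arXiv:2112.07096 — 2 statements merged into one kernel-verified Lean document; each statement's English description precedes it below -/
import Mathlib

section
/- Let ν be a mean-zero probability measure on ℝ^{d_M} with covariance matrix 𝒞 = E_ν[m mᵀ] having eigenvalues λ₁ ≥ … ≥ λ_{d_M} with orthonormal eigenvectors, and let V_r ∈ ℝ^{d_M×r} have as columns the eigenvectors corresponding to the r largest eigenvalues. Let q : ℝ^{d_M} → ℝ^{d_Q} be Lipschitz continuous with constant L_q. Then ‖q − q ∘ (V_r V_rᵀ)‖²_{L²_ν} ≤ L_q² Σ_{i=r+1}^{d_M} λ_i. -/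
open MeasureTheory Matrix
open scoped ENNReal

/-- `ℝ^n` with the Euclidean norm. -/
abbrev E (n : ℕ) := EuclideanSpace ℝ (Fin n)

/-- The `L²_ν` norm of a vector-valued function: `‖f‖²_{L²_ν} = ∫ ‖f(m)‖²_{ℓ²} dν(m)`. -/
noncomputable def L2norm {d k : ℕ} (ν : Measure (E d)) (f : E d → E k) : ℝ :=
  Real.sqrt (∫ m, ‖f m‖ ^ 2 ∂ν)

/-- Application of a matrix to a Euclidean vector. -/
noncomputable def matApp {m n : ℕ} (A : Matrix (Fin m) (Fin n) ℝ) (x : E n) : E m :=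
  Matrix.toEuclideanLin A x

/-- The operator norm of a matrix, induced by the Euclidean vector norms. -/
noncomputable def opNorm {m n : ℕ} (A : Matrix (Fin m) (Fin n) ℝ) : ℝ :=
  ‖(Matrix.toEuclideanLin A).toContinuousLinearMap‖

/-- Covariance matrix `𝒞 = E_ν[(m − m₀)(m − m₀)ᵀ]`. -/
noncomputable def covMatrix {d : ℕ} (ν : Measure (E d)) (m₀ : E d) :
    Matrix (Fin d) (Fin d) ℝ :=
  Matrix.of fun i j => ∫ m, (m i - m₀ i) * (m j - m₀ j) ∂ν

lemma integrable_mul_of_memL2 {α : Type*} [MeasurableSpace α] {μ : Measure α} {f g : α → ℝ}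
    (hf : MemLp f 2 μ) (hg : MemLp g 2 μ) : Integrable (fun x => f x * g x) μ := by
  have h : (1 : ℝ≥0∞)/1 = 1/2 + 1/2 := by
    rw [ENNReal.div_add_div_same, one_div_one, one_add_one_eq_two]
    exact (ENNReal.div_self two_ne_zero ENNReal.ofNat_ne_top).symm
  have := (hf.smul hg : MemLp (g • f) 1 μ)
  rw [memLp_one_iff_integrable] at this
  exact (by simpa [Pi.smul_apply, smul_eq_mul, mul_comm] using this : Integrable (f * g) μ)

lemma sum_sq_orth {d : ℕ} (V : Matrix (Fin d) (Fin d) ℝ) (h : Vᵀ * V = 1)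
    (S : Finset (Fin d)) (y : Fin d → ℝ) :
    ∑ b, (∑ i ∈ S, V b i * y i)^2 = ∑ i ∈ S, (y i)^2 := by
  have hVV : ∀ i i' : Fin d, ∑ b, V b i * V b i' = if i = i' then 1 else 0 := by
    intro i i'
    have := congrFun (congrFun h i) i'
    simpa [Matrix.mul_apply, Matrix.one_apply, Matrix.transpose_apply] using this
  calc ∑ b, (∑ i ∈ S, V b i * y i)^2
      = ∑ b, ∑ i ∈ S, ∑ i' ∈ S, (V b i * V b i') * (y i * y i') := by
        refine Finset.sum_congr rfl fun b _ => ?_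
        rw [sq, Finset.sum_mul_sum]
        exact Finset.sum_congr rfl fun i _ => Finset.sum_congr rfl fun i' _ => by ring
    _ = ∑ i ∈ S, ∑ i' ∈ S, (∑ b, V b i * V b i') * (y i * y i') := by
        rw [Finset.sum_comm]
        refine Finset.sum_congr rfl fun i _ => ?_
        rw [Finset.sum_comm]
        refine Finset.sum_congr rfl fun i' _ => ?_
        rw [Finset.sum_mul]
    _ = ∑ i ∈ S, (y i)^2 := by
        refine Finset.sum_congr rfl fun i hi => ?_
        rw [Finset.sum_eq_single i]
        · simp [hVV, sq]
        · intro i' hi' hne; simp [hVV, (Ne.symm hne)]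
        · intro hi'; exact absurd hi hi'

lemma matApp_apply {m n : ℕ} (A : Matrix (Fin m) (Fin n) ℝ) (x : E n) (b : Fin m) :
    matApp A x b = ∑ j, A b j * x j := by
  simp [matApp, Matrix.toEuclideanLin_apply, Matrix.mulVec, dotProduct]

lemma euclid_norm_sq {n : ℕ} (x : E n) : ‖x‖^2 = ∑ b, (x b)^2 := by
  rw [EuclideanSpace.norm_eq, Real.sq_sqrt (by positivity)]
  simp [Real.norm_eq_abs, sq_abs]

lemma map_castLE_filter {dM r : ℕ} (hr : r ≤ dM) :
    (Finset.univ.map (Fin.castLEEmb hr)) = Finset.univ.filter (fun i : Fin dM => (i:ℕ) < r) := by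
  ext i
  simp only [Finset.mem_map, Finset.mem_univ, true_and, Finset.mem_filter, Fin.castLEEmb_apply]
  constructor
  · rintro ⟨j, rfl⟩; exact j.isLt
  · intro hi; exact ⟨⟨i, hi⟩, rfl⟩

/-- Ridge function bound for the KLE input basis of a Lipschitz map:
`‖q − q ∘ (V_r V_rᵀ)‖²_{L²_ν} ≤ L_q² Σ_{i=r+1}^{d_M} λ_i`. -/
theorem kle_ridge_function_bound {dM dQ : ℕ}
    (ν : Measure (E dM)) [IsProbabilityMeasure ν]
    (hmom : MemLp (fun m : E dM => m) 2 ν)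
    (hmean0 : (∫ m, m ∂ν) = 0)
    (C : Matrix (Fin dM) (Fin dM) ℝ)
    (hC : ∀ i j, C i j = ∫ m, m i * m j ∂ν)
    (lam : Fin dM → ℝ) (Vfull : Matrix (Fin dM) (Fin dM) ℝ)
    (horth : Vfullᵀ * Vfull = 1)
    (heig : C * Vfull = Vfull * Matrix.diagonal lam)
    (hsort : ∀ i j : Fin dM, i ≤ j → lam j ≤ lam i)
    {r : ℕ} (hr : r ≤ dM)
    (Vr : Matrix (Fin dM) (Fin r) ℝ)
    (hVr : ∀ (i : Fin dM) (j : Fin r), Vr i j = Vfull i (Fin.castLE hr j))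
    (q : E dM → E dQ) (L : ℝ)
    (hLip : ∀ x y : E dM, ‖q x - q y‖ ≤ L * ‖x - y‖) :
    ∫ m, ‖q m - q (matApp (Vr * Vrᵀ) m)‖ ^ 2 ∂ν ≤
      L ^ 2 * ∑ i ∈ Finset.univ.filter (fun i : Fin dM => r ≤ (i : ℕ)), lam i := by
  classical
  set S : Finset (Fin dM) := Finset.univ.filter (fun i : Fin dM => r ≤ (i : ℕ)) with hS
  set y : Fin dM → E dM → ℝ := fun i m => ∑ a, Vfull a i * m a with hy
  -- coordinate projections are L²
  have hproj : ∀ a : Fin dM, MemLp (fun m : E dM => m a) 2 ν := fun a =>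
    (EuclideanSpace.proj a : E dM →L[ℝ] ℝ).comp_memLp' hmom
  have hy2 : ∀ i, MemLp (y i) 2 ν := by
    intro i
    have := memLp_finset_sum' (μ := ν) (p := (2:ℝ≥0∞))
      (f := fun (a : Fin dM) (m : E dM) => Vfull a i * m a) Finset.univ
      (fun a _ => (hproj a).const_mul (Vfull a i))
    rw [hy]
    convert this using 1
    ext m
    simp [Finset.sum_apply]
  have hmul : ∀ a b : Fin dM, Integrable (fun m : E dM => m a * m b) ν := fun a b =>
    integrable_mul_of_memL2 (hproj a) (hproj b)
  have hysq_int : ∀ i, Integrable (fun m => (y i m)^2) ν := by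
    intro i
    simpa [sq] using integrable_mul_of_memL2 (hy2 i) (hy2 i)
  -- diagonalization
  have hD : Vfullᵀ * C * Vfull = Matrix.diagonal lam := by
    rw [Matrix.mul_assoc, heig, ← Matrix.mul_assoc, horth, Matrix.one_mul]
  have hquad : ∀ i, (∑ a, ∑ b, Vfull a i * Vfull b i * C a b) = (Vfullᵀ * C * Vfull) i i := by
    intro i
    simp only [Matrix.mul_apply, Matrix.transpose_apply, Finset.sum_mul]
    rw [Finset.sum_comm]
    exact Finset.sum_congr rfl fun b _ => Finset.sum_congr rfl fun a _ => by ring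
  have hint_y : ∀ i, ∫ m, (y i m)^2 ∂ν = lam i := by
    intro i
    have h1 : ∀ m : E dM, (y i m)^2 = ∑ a, ∑ b, Vfull a i * Vfull b i * (m a * m b) := by
      intro m
      simp only [hy]
      rw [sq, Finset.sum_mul_sum]
      exact Finset.sum_congr rfl fun a _ => Finset.sum_congr rfl fun b _ => by ring
    calc ∫ m, (y i m)^2 ∂ν
        = ∫ m, ∑ a, ∑ b, Vfull a i * Vfull b i * (m a * m b) ∂ν := by simp_rw [h1]
      _ = ∑ a, ∑ b, Vfull a i * Vfull b i * ∫ m, m a * m b ∂ν := by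
          rw [integral_finset_sum _
            (fun a _ => integrable_finset_sum _ (fun b _ => (hmul a b).const_mul _))]
          refine Finset.sum_congr rfl fun a _ => ?_
          rw [integral_finset_sum _ (fun b _ => (hmul a b).const_mul _)]
          exact Finset.sum_congr rfl fun b _ => integral_const_mul _ _
      _ = ∑ a, ∑ b, Vfull a i * Vfull b i * C a b := by
          exact Finset.sum_congr rfl fun a _ => Finset.sum_congr rfl fun b _ => by rw [hC]
      _ = lam i := by rw [hquad, hD]; simp
  -- pointwise decomposition
  have hVV1 : Vfull * Vfullᵀ = 1 := mul_eq_one_comm.mp horth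
  have hptw : ∀ m : E dM, ‖m - matApp (Vr * Vrᵀ) m‖^2 = ∑ i ∈ S, (y i m)^2 := by
    intro m
    have hm : ∀ b, m b = ∑ i, Vfull b i * y i m := by
      intro b
      have h2 : ∀ a, ∑ i, Vfull b i * (Vfull a i * m a) = (Vfull * Vfullᵀ) b a * m a := by
        intro a
        rw [Matrix.mul_apply, Finset.sum_mul]
        exact Finset.sum_congr rfl fun i _ => by simp [Matrix.transpose_apply]; ring
      calc m b = ∑ a, (Vfull * Vfullᵀ) b a * m a := by
            rw [hVV1]; simp [Matrix.one_apply]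
        _ = ∑ a, ∑ i, Vfull b i * (Vfull a i * m a) := by
            exact Finset.sum_congr rfl fun a _ => (h2 a).symm
        _ = ∑ i, Vfull b i * y i m := by
            rw [Finset.sum_comm]
            exact Finset.sum_congr rfl fun i _ => by rw [hy]; simp [Finset.mul_sum]
    have hP : ∀ b, matApp (Vr * Vrᵀ) m b
        = ∑ i ∈ Finset.univ.filter (fun i : Fin dM => (i:ℕ) < r), Vfull b i * y i m := by
      intro b
      rw [matApp_apply, ← map_castLE_filter hr, Finset.sum_map]
      calc ∑ a, (Vr * Vrᵀ) b a * m a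
          = ∑ a, ∑ j : Fin r, Vr b j * Vr a j * m a := by
            refine Finset.sum_congr rfl fun a _ => ?_
            rw [Matrix.mul_apply, Finset.sum_mul]
            exact Finset.sum_congr rfl fun j _ => by simp [Matrix.transpose_apply]
        _ = ∑ j : Fin r, ∑ a, Vr b j * Vr a j * m a := Finset.sum_comm
        _ = ∑ j : Fin r, Vfull b (Fin.castLEEmb hr j) * y (Fin.castLEEmb hr j) m := by
            refine Finset.sum_congr rfl fun j _ => ?_
            simp only [hy, hVr, Fin.castLEEmb_apply, Finset.mul_sum]
            exact Finset.sum_congr rfl fun a _ => by ring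
    have hcoord : ∀ b, (m - matApp (Vr * Vrᵀ) m) b = ∑ i ∈ S, Vfull b i * y i m := by
      intro b
      have hsplit := Finset.sum_filter_add_sum_filter_not Finset.univ
        (fun i : Fin dM => (i:ℕ) < r) (fun i => Vfull b i * y i m)
      have hnot : Finset.univ.filter (fun i : Fin dM => ¬ ((i:ℕ) < r)) = S := by
        ext i; simp [hS, not_lt]
      show m b - matApp (Vr * Vrᵀ) m b = _
      rw [hm b, hP b, ← hsplit, hnot]
      ring
    calc ‖m - matApp (Vr * Vrᵀ) m‖^2 = ∑ b, ((m - matApp (Vr * Vrᵀ) m) b)^2 :=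
          euclid_norm_sq _
      _ = ∑ b, (∑ i ∈ S, Vfull b i * y i m)^2 := by
          exact Finset.sum_congr rfl fun b _ => by rw [hcoord b]
      _ = ∑ i ∈ S, (y i m)^2 := sum_sq_orth Vfull horth S (fun i => y i m)
  -- main chain
  calc ∫ m, ‖q m - q (matApp (Vr * Vrᵀ) m)‖^2 ∂ν
      ≤ ∫ m, L^2 * ∑ i ∈ S, (y i m)^2 ∂ν := by
        apply integral_mono_of_nonneg
        · exact ae_of_all _ fun m => sq_nonneg _
        · exact (integrable_finset_sum _ fun i _ => hysq_int i).const_mul _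
        · refine ae_of_all _ fun m => ?_
          have h := pow_le_pow_left₀ (norm_nonneg _) (hLip m (matApp (Vr * Vrᵀ) m)) 2
          rw [mul_pow] at h
          calc ‖q m - q (matApp (Vr * Vrᵀ) m)‖^2
              ≤ L^2 * ‖m - matApp (Vr * Vrᵀ) m‖^2 := h
            _ = L^2 * ∑ i ∈ S, (y i m)^2 := by rw [hptw m]
    _ = L^2 * ∑ i ∈ S, ∫ m, (y i m)^2 ∂ν := by
        rw [MeasureTheory.integral_const_mul, integral_finset_sum _ fun i _ => hysq_int i]
    _ = L^2 * ∑ i ∈ S, lam i := by simp_rw [hint_y]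
end

section
/- Let ν be a probability measure on ℝ^{d_M} and q : ℝ^{d_M} → ℝ^{d_Q} measurable with ‖q‖_{L²_ν} < ∞. Let Φ ∈ ℝ^{d_Q×d_Q} be an orthonormal eigenvector matrix of the symmetric positive semidefinite matrix E_ν[q qᵀ] with eigenvalues λ₁ ≥ … ≥ λ_{d_Q} sorted in descending order, and let Φ_r ∈ ℝ^{d_Q×r} consist of the first r columns (the rank-r POD basis). Then for every matrix P_r ∈ ℝ^{d_Q×r} with orthonormal columns, ‖q − Φ_r Φ_rᵀ q‖²_{L²_ν} ≤ ‖q − P_r P_rᵀ q‖²_{L²_ν}; i.e. the rank-r POD basis minimizes the mean-square projection error among rank-r orthonormal bases. -/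
open MeasureTheory Matrix

/-- The second-moment matrix `E_ν[q qᵀ] = ∫ q(m) q(m)ᵀ dν(m)`. -/
noncomputable def secondMoment {dM dQ : ℕ} (ν : Measure (E dM)) (q : E dM → E dQ) :
    Matrix (Fin dQ) (Fin dQ) ℝ :=
  Matrix.of fun i j => ∫ m, q m i * q m j ∂ν

section PodAux

set_option linter.unusedSectionVars false

open Finset

/-! ### Pure linear-algebra auxiliary lemmas -/

lemma pod_proj_norm {dQ r : ℕ} (Pr : Matrix (Fin dQ) (Fin r) ℝ) (hPr : Prᵀ * Pr = 1)
    (v : Fin dQ → ℝ) :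
    ∑ i, (v i - ((Pr * Prᵀ) *ᵥ v) i) ^ 2
      = (∑ i, v i ^ 2) - ∑ k, ((Prᵀ *ᵥ v) k) ^ 2 := by
  set y : Fin r → ℝ := Prᵀ *ᵥ v with hy
  have hw : (Pr * Prᵀ) *ᵥ v = Pr *ᵥ y := by rw [← mulVec_mulVec]
  have h1 : v ⬝ᵥ (Pr *ᵥ y) = y ⬝ᵥ y := by
    rw [dotProduct_mulVec, ← mulVec_transpose]
  have h2 : (Pr *ᵥ y) ⬝ᵥ (Pr *ᵥ y) = y ⬝ᵥ y := by
    rw [dotProduct_mulVec, ← mulVec_transpose, mulVec_mulVec, hPr, one_mulVec]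
  have expand : ∑ i, (v i - ((Pr * Prᵀ) *ᵥ v) i) ^ 2
      = (∑ i, v i ^ 2) - 2 * (v ⬝ᵥ (Pr *ᵥ y)) + (Pr *ᵥ y) ⬝ᵥ (Pr *ᵥ y) := by
    rw [hw]
    simp only [dotProduct, sub_sq]
    rw [Finset.sum_add_distrib, Finset.sum_sub_distrib, Finset.mul_sum]
    ring_nf
  rw [expand, h1, h2]
  have : y ⬝ᵥ y = ∑ k, y k ^ 2 := by simp [dotProduct, sq]
  rw [this]; ring

lemma pod_trace_form {dQ r : ℕ} (M : Matrix (Fin dQ) (Fin dQ) ℝ)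
    (B : Matrix (Fin dQ) (Fin r) ℝ) :
    ∑ k, ∑ i, ∑ j, B i k * B j k * M i j = (Bᵀ * M * B).trace := by
  simp only [Matrix.trace, Matrix.diag, Matrix.mul_apply, Matrix.transpose_apply,
    Finset.sum_mul, Finset.mul_sum]
  refine Finset.sum_congr rfl fun k _ => ?_
  rw [Finset.sum_comm]
  exact Finset.sum_congr rfl fun j _ => Finset.sum_congr rfl fun i _ => by ring

lemma pod_trace_CDC {dQ r : ℕ} (lam : Fin dQ → ℝ) (C : Matrix (Fin dQ) (Fin r) ℝ) :
    (Cᵀ * Matrix.diagonal lam * C).trace = ∑ j, lam j * ∑ k, C j k ^ 2 := by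
  have h : ∀ k, (Cᵀ * Matrix.diagonal lam * C) k k = ∑ x, C x k * lam x * C x k := by
    intro k
    rw [Matrix.mul_apply]
    refine Finset.sum_congr rfl fun x _ => ?_
    rw [Matrix.mul_diagonal, Matrix.transpose_apply]
  simp only [Matrix.trace, Matrix.diag, h]
  rw [Finset.sum_comm]
  refine Finset.sum_congr rfl fun j _ => ?_
  rw [Finset.mul_sum]
  exact Finset.sum_congr rfl fun k _ => by ring

lemma pod_diag_le_one {dQ r : ℕ} (C : Matrix (Fin dQ) (Fin r) ℝ) (hC : Cᵀ * C = 1)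
    (j : Fin dQ) : ∑ k, C j k ^ 2 ≤ 1 := by
  set G := C * Cᵀ with hG
  have hGG : G * G = G := by
    rw [hG, Matrix.mul_assoc, ← Matrix.mul_assoc Cᵀ, hC, Matrix.one_mul]
  have hsym : ∀ a b, G a b = G b a := by
    intro a b; simp [hG, Matrix.mul_apply, Matrix.transpose_apply, mul_comm]
  have hjj : G j j = ∑ k, C j k ^ 2 := by
    simp [hG, Matrix.mul_apply, Matrix.transpose_apply, sq]
  have hsq : G j j = ∑ l, G j l ^ 2 := by
    have := congrFun (congrFun hGG j) j
    rw [Matrix.mul_apply] at this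
    rw [← this]
    exact Finset.sum_congr rfl fun l _ => by rw [sq, hsym j l]
  have hle : G j j ^ 2 ≤ ∑ l, G j l ^ 2 :=
    Finset.single_le_sum (f := fun l => G j l ^ 2) (fun l _ => sq_nonneg _) (Finset.mem_univ j)
  rw [← hsq] at hle
  nlinarith [sq_nonneg (G j j - 1), hjj]

lemma pod_sorted_sum_le {dQ r : ℕ} (hr : r ≤ dQ) (lam c : Fin dQ → ℝ)
    (hsort : ∀ i j : Fin dQ, i ≤ j → lam j ≤ lam i) (hlam0 : ∀ j, 0 ≤ lam j)
    (hc0 : ∀ j, 0 ≤ c j) (hc1 : ∀ j, c j ≤ 1) (hsum : ∑ j, c j = r) :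
    ∑ j, lam j * c j ≤ ∑ k : Fin r, lam (Fin.castLE hr k) := by
  classical
  set e : Fin dQ → ℝ := fun j => if (j : ℕ) < r then 1 else 0 with he_def
  have hee : ∀ f : Fin dQ → ℝ, ∑ k : Fin r, f (Fin.castLE hr k) = ∑ j, f j * e j := by
    intro f
    rw [he_def]
    simp only [mul_ite, mul_one, mul_zero]
    rw [Finset.sum_ite, Finset.sum_const_zero, add_zero]
    exact (Finset.sum_bij'
      (s := (Finset.univ : Finset (Fin r)))
      (t := Finset.univ.filter fun j : Fin dQ => (j : ℕ) < r)
      (f := fun k : Fin r => f (Fin.castLE hr k))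
      (g := fun j : Fin dQ => f j)
      (fun k _ => Fin.castLE hr k)
      (fun j hj => (⟨(j : ℕ), by simpa using hj⟩ : Fin r))
      (fun k _ => by simpa using k.2)
      (fun j hj => Finset.mem_univ _)
      (fun k _ => rfl)
      (fun j hj => rfl)
      (fun k _ => rfl))
  have hesum : ∑ j, e j = (r : ℝ) := by
    have := hee (fun _ => 1)
    simp only [one_mul] at this
    rw [← this]
    simp
  have he' : ∑ k : Fin r, lam (Fin.castLE hr k) = ∑ j, lam j * e j := hee lam
  set t : ℝ := if h : r < dQ then lam ⟨r, h⟩ else 0 with ht_def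
  have hterm : ∀ j : Fin dQ, (lam j - t) * (c j - e j) ≤ 0 := by
    intro j
    by_cases hj : (j : ℕ) < r
    · have hej : e j = 1 := by simp [he_def, hj]
      have hlt : 0 ≤ lam j - t := by
        rw [ht_def]
        split
        · next h =>
          have : lam ⟨r, h⟩ ≤ lam j := hsort j ⟨r, h⟩ (by simp [Fin.le_def]; omega)
          linarith
        · simpa using hlam0 j
      have : c j - e j ≤ 0 := by rw [hej]; linarith [hc1 j]
      exact mul_nonpos_of_nonneg_of_nonpos hlt this
    · have hej : e j = 0 := by simp [he_def, hj]
      have hrdQ : r < dQ := lt_of_le_of_lt (le_of_not_gt hj) j.2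
      have hlt : lam j - t ≤ 0 := by
        rw [ht_def, dif_pos hrdQ]
        have : lam j ≤ lam ⟨r, hrdQ⟩ := hsort ⟨r, hrdQ⟩ j (by simp [Fin.le_def]; omega)
        linarith
      have : 0 ≤ c j - e j := by rw [hej]; simpa using hc0 j
      exact mul_nonpos_of_nonpos_of_nonneg hlt this
  have hsumle : ∑ j, (lam j - t) * (c j - e j) ≤ 0 :=
    Finset.sum_nonpos fun j _ => hterm j
  have hident : ∑ j, (lam j - t) * (c j - e j)
      = (∑ j, lam j * c j) - (∑ j, lam j * e j) - t * ((∑ j, c j) - ∑ j, e j) := by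
    simp only [sub_mul, mul_sub, Finset.sum_sub_distrib, Finset.mul_sum]
    ring
  rw [hsum, hesum, sub_self, mul_zero, sub_zero] at hident
  rw [he']
  linarith [hident ▸ hsumle]

/-! ### Integration auxiliary lemmas -/

variable {dM dQ : ℕ} {ν : Measure (E dM)} [IsProbabilityMeasure ν] {q : E dM → E dQ}

lemma pod_memLp_comp (hq : MemLp q 2 ν) (i : Fin dQ) : MemLp (fun m => q m i) 2 ν := by
  have := (EuclideanSpace.proj (𝕜 := ℝ) i).comp_memLp' hq
  exact this

lemma pod_int_mul (hq : MemLp q 2 ν) (i j : Fin dQ) :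
    Integrable (fun m => q m i * q m j) ν := by
  have hi := pod_memLp_comp hq i
  have hj := pod_memLp_comp hq j
  refine Integrable.mono' ((hi.integrable_sq).add (hj.integrable_sq))
    (hi.1.mul hj.1) (Filter.Eventually.of_forall fun m => ?_)
  simp only [Pi.add_apply]
  have : ‖q m i * q m j‖ = |q m i| * |q m j| := by rw [norm_mul]; rfl
  rw [this]
  nlinarith [sq_nonneg (|q m i| - |q m j|), sq_abs (q m i), sq_abs (q m j),
    abs_nonneg (q m i), abs_nonneg (q m j)]

lemma pod_memLp_comb (hq : MemLp q 2 ν) (c : Fin dQ → ℝ) :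
    MemLp (fun m => ∑ i, c i * q m i) 2 ν :=
  memLp_finset_sum (f := fun i m => c i * q m i) Finset.univ
    (fun i _ => (pod_memLp_comp hq i).const_mul (c i))

lemma pod_int_sq_comb (hq : MemLp q 2 ν) (c : Fin dQ → ℝ) :
    ∫ m, (∑ i, c i * q m i) ^ 2 ∂ν = ∑ i, ∑ j, c i * c j * secondMoment ν q i j := by
  have hexp : ∀ m, (∑ i, c i * q m i) ^ 2
      = ∑ i, ∑ j, c i * c j * (q m i * q m j) := by
    intro m
    rw [sq, Finset.sum_mul_sum]
    exact Finset.sum_congr rfl fun i _ => Finset.sum_congr rfl fun j _ => by ring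
  simp only [hexp]
  rw [integral_finset_sum _ fun i _ => integrable_finset_sum _ fun j _ =>
    ((pod_int_mul hq i j).const_mul _)]
  refine Finset.sum_congr rfl fun i _ => ?_
  rw [integral_finset_sum _ fun j _ => ((pod_int_mul hq i j).const_mul _)]
  refine Finset.sum_congr rfl fun j _ => ?_
  rw [integral_const_mul]
  rfl

lemma pod_err_eq (hq : MemLp q 2 ν) {r : ℕ}
    (Pr : Matrix (Fin dQ) (Fin r) ℝ) (hPr : Prᵀ * Pr = 1) :
    ∫ m, ‖q m - matApp (Pr * Prᵀ) (q m)‖ ^ 2 ∂ν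
      = (∫ m, ∑ i, q m i ^ 2 ∂ν) - (Prᵀ * secondMoment ν q * Pr).trace := by
  have hpoint : ∀ m, ‖q m - matApp (Pr * Prᵀ) (q m)‖ ^ 2
      = (∑ i, q m i ^ 2) - ∑ k, (∑ i, Pr i k * q m i) ^ 2 := by
    intro m
    have h0 : ‖q m - matApp (Pr * Prᵀ) (q m)‖ ^ 2
        = ∑ i, (q m i - ((Pr * Prᵀ) *ᵥ (fun j => q m j)) i) ^ 2 := by
      rw [PiLp.norm_sq_eq_of_L2]
      simp only [Real.norm_eq_abs, sq_abs]
      rfl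
    rw [h0, pod_proj_norm Pr hPr]
    have : ∀ k : Fin r, (Prᵀ *ᵥ fun j => q m j) k = ∑ i, Pr i k * q m i := by
      intro k
      simp [mulVec, dotProduct, transpose_apply, mul_comm]
    simp only [this]
  simp only [hpoint]
  have hint1 : Integrable (fun m => ∑ i, q m i ^ 2) ν :=
    integrable_finset_sum _ fun i _ => (pod_memLp_comp hq i).integrable_sq
  have hsq : ∀ k : Fin r, Integrable (fun m => (∑ i, Pr i k * q m i) ^ 2) ν :=
    fun k => (pod_memLp_comb hq fun i => Pr i k).integrable_sq
  have hint2 : Integrable (fun m => ∑ k, (∑ i, Pr i k * q m i) ^ 2) ν :=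
    integrable_finset_sum _ fun k _ => hsq k
  rw [integral_sub hint1 hint2]
  congr 1
  rw [integral_finset_sum _ fun k _ => hsq k, ← pod_trace_form]
  exact Finset.sum_congr rfl fun k _ => pod_int_sq_comb hq fun i => Pr i k

end PodAux

/-- POD optimality: the rank-`r` POD basis (top `r` eigenvectors of `E_ν[q qᵀ]`,
eigenvalues sorted in descending order) minimizes the mean-square projection
error among rank-`r` orthonormal bases. -/
theorem pod_optimality {dM dQ : ℕ}
    (ν : Measure (E dM)) [IsProbabilityMeasure ν]
    (q : E dM → E dQ) (hq_meas : Measurable q) (hq : MemLp q 2 ν)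
    (lam : Fin dQ → ℝ) (Φ : Matrix (Fin dQ) (Fin dQ) ℝ)
    (horth : Φᵀ * Φ = 1)
    (heig : secondMoment ν q * Φ = Φ * Matrix.diagonal lam)
    (hsort : ∀ i j : Fin dQ, i ≤ j → lam j ≤ lam i)
    {r : ℕ} (hr : r ≤ dQ)
    (Φr : Matrix (Fin dQ) (Fin r) ℝ)
    (hΦr : ∀ (i : Fin dQ) (j : Fin r), Φr i j = Φ i (Fin.castLE hr j)) :
    ∀ Pr : Matrix (Fin dQ) (Fin r) ℝ, Prᵀ * Pr = 1 →
      ∫ m, ‖q m - matApp (Φr * Φrᵀ) (q m)‖ ^ 2 ∂ν ≤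
        ∫ m, ‖q m - matApp (Pr * Prᵀ) (q m)‖ ^ 2 ∂ν := by
  intro Pr hPr
  set M := secondMoment ν q with hM
  -- orthogonality facts
  have hΦΦt : Φ * Φᵀ = 1 := mul_eq_one_comm.mp horth
  have hD : Φᵀ * M * Φ = Matrix.diagonal lam := by
    rw [Matrix.mul_assoc, heig, ← Matrix.mul_assoc, horth, Matrix.one_mul]
  -- `Φr` has orthonormal columns
  have hΦrOrth : Φrᵀ * Φr = 1 := by
    ext k l
    have h1 : (Φᵀ * Φ) (Fin.castLE hr k) (Fin.castLE hr l)
        = (1 : Matrix (Fin dQ) (Fin dQ) ℝ) (Fin.castLE hr k) (Fin.castLE hr l) := by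
      rw [horth]
    rw [Matrix.mul_apply] at h1
    simp only [Matrix.transpose_apply] at h1
    rw [Matrix.mul_apply]
    simp only [Matrix.transpose_apply, hΦr]
    rw [h1]
    by_cases hkl : k = l
    · subst hkl; simp [Matrix.one_apply]
    · have : Fin.castLE hr k ≠ Fin.castLE hr l := by
        simpa [Fin.castLE_inj] using hkl
      simp [Matrix.one_apply, hkl, this]
  -- eigenvalues are nonnegative
  have hlam0 : ∀ j, 0 ≤ lam j := by
    intro j
    have h1 : lam j = (Φᵀ * M * Φ) j j := by rw [hD]; simp
    have h2 : (Φᵀ * M * Φ) j j = ∑ i, ∑ i', Φ i j * Φ i' j * M i i' := by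
      simp only [Matrix.mul_apply, Matrix.transpose_apply, Finset.sum_mul, Finset.mul_sum]
      rw [Finset.sum_comm]
      exact Finset.sum_congr rfl fun a _ => Finset.sum_congr rfl fun b _ => by ring
    rw [h1, h2, ← pod_int_sq_comb hq fun i => Φ i j]
    exact integral_nonneg fun m => sq_nonneg _
  -- the two error formulas
  rw [pod_err_eq hq Φr hΦrOrth, pod_err_eq hq Pr hPr]
  have key : (Prᵀ * M * Pr).trace ≤ (Φrᵀ * M * Φr).trace := by
    -- trace over Φr equals the top-r eigenvalue sum
    have hΦrtr : (Φrᵀ * M * Φr).trace = ∑ k : Fin r, lam (Fin.castLE hr k) := by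
      rw [Matrix.trace]
      refine Finset.sum_congr rfl fun k _ => ?_
      show (Φrᵀ * M * Φr) k k = lam (Fin.castLE hr k)
      have h2 : (Φrᵀ * M * Φr) k k = (Φᵀ * M * Φ) (Fin.castLE hr k) (Fin.castLE hr k) := by
        rw [Matrix.mul_apply, Matrix.mul_apply]
        refine Finset.sum_congr rfl fun j _ => ?_
        rw [Matrix.mul_apply, Matrix.mul_apply]
        simp only [Matrix.transpose_apply, hΦr]
      rw [h2, hD]
      simp
    -- express the Pr trace through C = Φᵀ Pr
    set C : Matrix (Fin dQ) (Fin r) ℝ := Φᵀ * Pr with hC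
    have hPrC : Φ * C = Pr := by rw [hC, ← Matrix.mul_assoc, hΦΦt, Matrix.one_mul]
    have hCtC : Cᵀ * C = 1 := by
      rw [hC, Matrix.transpose_mul, Matrix.transpose_transpose, Matrix.mul_assoc,
        ← Matrix.mul_assoc Φ, hΦΦt, Matrix.one_mul, hPr]
    have htr : Prᵀ * M * Pr = Cᵀ * Matrix.diagonal lam * C := by
      rw [← hPrC, Matrix.transpose_mul, ← hD]
      simp only [Matrix.mul_assoc]
    have hc0 : ∀ j, (0:ℝ) ≤ ∑ k, C j k ^ 2 :=
      fun j => Finset.sum_nonneg fun k _ => sq_nonneg _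
    have hc1 : ∀ j, ∑ k, C j k ^ 2 ≤ 1 := pod_diag_le_one C hCtC
    have hcsum : ∑ j, ∑ k, C j k ^ 2 = (r : ℝ) := by
      rw [Finset.sum_comm]
      have : ∀ k : Fin r, ∑ j, C j k ^ 2 = (Cᵀ * C) k k := by
        intro k
        rw [Matrix.mul_apply]
        exact Finset.sum_congr rfl fun j _ => by rw [Matrix.transpose_apply, sq]
      simp only [this, hCtC]
      simp [Matrix.one_apply]
    rw [htr, pod_trace_CDC, hΦrtr]
    exact pod_sorted_sum_le hr lam (fun j => ∑ k, C j k ^ 2) hsort hlam0 hc0 hc1 hcsum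
  linarith
end
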